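/- The Fermat curve $C : x_0^{p+1} + x_1^{p+1} + x_2^{p+1} = 0$ in $\mathbb{P}^2$ over an algebraically closed field $k$ of odd characteristic $p$ is a smooth projective curve, and it has exactly $p^3 + 1$ points with coordinates in the subfield $\mathbb{F}_{p^2} \subset k$. -/
import Mathlib
set_option linter.unusedSectionVars false
open Finset Polynomial

section aux
variable {K : Type*} [Field K] [Fintype K] [DecidableEq K]

lemma aux_root_bound (n : ℕ) (hn : 0 < n) (c : K) :
    (univ.filter fun x : K => x ^ n = c).card ≤ n := by
  have hsub : (univ.filter fun x : K => x ^ n = c) ⊆ (nthRoots n c).toFinset := by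
    intro x hx
    simp only [mem_filter] at hx
    simpa [Multiset.mem_toFinset, mem_nthRoots hn] using hx.2
  calc (univ.filter fun x : K => x ^ n = c).card
      ≤ (nthRoots n c).toFinset.card := Finset.card_le_card hsub
    _ ≤ Multiset.card (nthRoots n c) := Multiset.toFinset_card_le _
    _ ≤ n := card_nthRoots n c

lemma aux_fixed {p : ℕ} (hcard : Fintype.card K = p ^ 2) (x : K) :
    (x ^ (p + 1)) ^ p = x ^ (p + 1) := by
  have h1 : x ^ (p ^ 2) = x := by
    have := FiniteField.pow_card x
    rwa [hcard] at this
  calc (x ^ (p + 1)) ^ p = x ^ (p ^ 2) * x ^ p := by rw [← pow_mul, ← pow_add]; ring_nf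
    _ = x ^ (p + 1) := by rw [h1, pow_succ, mul_comm]

lemma aux_fiber {p : ℕ} (hp : 2 ≤ p) (hcard : Fintype.card K = p ^ 2) :
    ∀ c : K, c ≠ 0 → c ^ p = c →
      (univ.filter fun x : K => x ^ (p + 1) = c).card = p + 1 := by
  classical
  set Φ : Finset K := univ.filter (fun c : K => c ≠ 0 ∧ c ^ p = c) with hΦdef
  have hΦle : Φ.card ≤ p - 1 := by
    have hsub : Φ ⊆ univ.filter fun c : K => c ^ (p - 1) = 1 := by
      intro c hc
      simp only [hΦdef, mem_filter, mem_univ, true_and] at hc ⊢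
      obtain ⟨hc0, hcp⟩ := hc
      have h1 : c ^ (p - 1) * c = 1 * c := by
        rw [one_mul, ← pow_succ, Nat.sub_add_cancel (by omega)]; exact hcp
      exact mul_right_cancel₀ hc0 h1
    exact le_trans (card_le_card hsub) (aux_root_bound (p - 1) (by omega) 1)
  have hmaps : ∀ x ∈ univ.erase (0 : K), x ^ (p + 1) ∈ Φ := by
    intro x hx
    rw [mem_erase] at hx
    simp only [hΦdef, mem_filter, mem_univ, true_and]
    exact ⟨pow_ne_zero _ hx.1, aux_fixed hcard x⟩
  have hfib := Finset.card_eq_sum_card_fiberwise hmaps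
  have hm : (univ.erase (0 : K)).card + 1 = p ^ 2 := by
    rw [card_erase_of_mem (mem_univ 0), card_univ, hcard]
    have : 1 ≤ p ^ 2 := Nat.one_le_pow 2 p (by omega)
    omega
  have hle : ∀ c ∈ Φ, ((univ.erase (0 : K)).filter fun x => x ^ (p + 1) = c).card ≤ p + 1 := by
    intro c _
    refine le_trans (card_le_card (filter_subset_filter _ (fun x _ => mem_univ x))) ?_
    exact aux_root_bound (p + 1) (by omega) c
  -- squeeze
  obtain ⟨a, ha⟩ : ∃ a, p = a + 1 := ⟨p - 1, by omega⟩
  have hmm : (univ.erase (0 : K)).card = (p - 1) * (p + 1) := by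
    subst ha; simp only [Nat.add_sub_cancel]; nlinarith [hm]
  have hsum_le : ∑ c ∈ Φ, ((univ.erase (0 : K)).filter fun x => x ^ (p + 1) = c).card
      ≤ Φ.card * (p + 1) := by
    rw [← smul_eq_mul, ← Finset.sum_const]
    exact Finset.sum_le_sum hle
  have hkey : ∑ c ∈ Φ, ((univ.erase (0 : K)).filter fun x => x ^ (p + 1) = c).card
      = ∑ c ∈ Φ, (p + 1) := by
    rw [Finset.sum_const, smul_eq_mul]
    have h2 : Φ.card * (p + 1) ≤ (p - 1) * (p + 1) :=
      Nat.mul_le_mul_right _ hΦle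
    omega
  have hall := (Finset.sum_eq_sum_iff_of_le hle).1 hkey
  intro c hc0 hcp
  have hcΦ : c ∈ Φ := by simp only [hΦdef, mem_filter, mem_univ, true_and]; exact ⟨hc0, hcp⟩
  have h3 := hall c hcΦ
  have h4 : (univ.filter fun x : K => x ^ (p + 1) = c)
      = ((univ.erase (0 : K)).filter fun x => x ^ (p + 1) = c) := by
    ext x
    simp only [mem_filter, mem_univ, true_and, mem_erase]
    refine ⟨fun h => ⟨⟨?_, trivial⟩, h⟩, fun h => h.2⟩
    rintro rfl
    exact hc0 (by rw [← h, zero_pow]; omega)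
  rw [h4, h3]
end aux

section aux2
variable {K : Type*} [Field K] [Fintype K] [DecidableEq K] {p : ℕ} [Fact p.Prime] [CharP K p]

lemma aux_N (hodd : Odd p) (hcard : Fintype.card K = p ^ 2) (a b : K) :
    (univ.filter fun z : K => z ^ (p + 1) = -(a ^ (p + 1) + b ^ (p + 1))).card
      = if a ^ (p + 1) + b ^ (p + 1) = 0 then 1 else p + 1 := by
  have hp2 : 2 ≤ p := (Fact.out : p.Prime).two_le
  have hpne : p + 1 ≠ 0 := by omega
  by_cases h : a ^ (p + 1) + b ^ (p + 1) = 0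
  · rw [if_pos h, h, neg_zero]
    have h2 : (univ.filter fun z : K => z ^ (p + 1) = 0) = {0} := by
      ext z
      simp [pow_eq_zero_iff hpne]
    rw [h2, card_singleton]
  · rw [if_neg h]
    refine aux_fiber hp2 hcard _ (neg_ne_zero.2 h) ?_
    rw [Odd.neg_pow hodd, add_pow_char, aux_fixed hcard a, aux_fixed hcard b]

lemma aux_affine (hodd : Odd p) (hcard : Fintype.card K = p ^ 2) :
    Fintype.card {v : Fin 3 → K // ∑ i, (v i) ^ (p + 1) = 0} + p ^ 3 = p ^ 5 + p ^ 2 := by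
  have hp2 : 2 ≤ p := (Fact.out : p.Prime).two_le
  have hpne : p + 1 ≠ 0 := by omega
  have e : {v : Fin 3 → K // ∑ i, (v i) ^ (p + 1) = 0} ≃
      (x : K) × (y : K) × {z : K // z ^ (p + 1) = -(x ^ (p + 1) + y ^ (p + 1))} :=
    { toFun := fun v => ⟨v.1 0, v.1 1, v.1 2, by
        have h := v.2
        rw [Fin.sum_univ_three] at h
        linear_combination h⟩
      invFun := fun s => ⟨![s.1, s.2.1, s.2.2.1], by
        rw [Fin.sum_univ_three]
        show s.1 ^ (p+1) + s.2.1 ^ (p+1) + s.2.2.1 ^ (p+1) = 0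
        linear_combination s.2.2.2⟩
      left_inv := fun v => Subtype.ext (by
        funext i; fin_cases i <;> rfl)
      right_inv := fun s => rfl }
  have hN0 : ∀ x : K, (univ.filter fun y : K => x ^ (p + 1) + y ^ (p + 1) = 0).card
      = if x = 0 then 1 else p + 1 := by
    intro x
    have h1 : (univ.filter fun y : K => x ^ (p + 1) + y ^ (p + 1) = 0)
        = (univ.filter fun y : K => y ^ (p + 1) = -(x ^ (p + 1) + 0 ^ (p + 1))) := by
      ext y
      rw [mem_filter, mem_filter]
      constructor
      · rintro ⟨h1, h2⟩
        exact ⟨h1, by rw [zero_pow hpne, add_zero]; linear_combination h2⟩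
      · rintro ⟨h1, h2⟩
        rw [zero_pow hpne, add_zero] at h2
        exact ⟨h1, by linear_combination h2⟩
    rw [h1, aux_N hodd hcard]
    rw [zero_pow hpne, add_zero]
    by_cases hx : x = 0
    · rw [if_pos hx, if_pos (by rw [hx, zero_pow hpne])]
    · rw [if_neg hx, if_neg (fun h => hx (by
        have := pow_eq_zero_iff hpne |>.mp h
        exact this))]
  have hm1 : 1 ≤ p ^ 2 := Nat.one_le_pow 2 p (by omega)
  have hsum01 : ∀ (c : ℕ), ∑ x : K, (if x = 0 then 1 else c) = 1 + (p ^ 2 - 1) * c := by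
    intro c
    rw [← Finset.add_sum_erase univ _ (mem_univ (0 : K)), if_pos rfl]
    congr 1
    have h2 : ∀ x ∈ univ.erase (0 : K), (if x = 0 then 1 else c) = c :=
      fun x hx => if_neg (Finset.mem_erase.mp hx).1
    rw [Finset.sum_eq_card_nsmul h2, card_erase_of_mem (mem_univ 0), card_univ, hcard,
      smul_eq_mul]
  have hB : ∑ x : K, ∑ y : K, (if x ^ (p + 1) + y ^ (p + 1) = 0 then (1:ℕ) else 0)
      = 1 + (p ^ 2 - 1) * (p + 1) := by
    have hinner : ∀ x : K, ∑ y : K, (if x ^ (p + 1) + y ^ (p + 1) = 0 then (1:ℕ) else 0)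
        = if x = 0 then 1 else p + 1 := by
      intro x
      rw [Finset.sum_boole, ← hN0 x]
      norm_cast
    simp only [hinner]
    exact hsum01 (p + 1)
  -- pointwise identity summed
  have hpoint : ∀ x y : K,
      (if x ^ (p + 1) + y ^ (p + 1) = 0 then 1 else p + 1)
        + p * (if x ^ (p + 1) + y ^ (p + 1) = 0 then (1:ℕ) else 0) = p + 1 := by
    intro x y
    by_cases h : x ^ (p + 1) + y ^ (p + 1) = 0
    · rw [if_pos h, if_pos h]; omega
    · rw [if_neg h, if_neg h]; omega
  have hSB : (∑ x : K, ∑ y : K, (if x ^ (p + 1) + y ^ (p + 1) = 0 then 1 else p + 1))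
      + p * (∑ x : K, ∑ y : K, (if x ^ (p + 1) + y ^ (p + 1) = 0 then (1:ℕ) else 0))
      = p ^ 2 * (p ^ 2 * (p + 1)) := by
    have hrow : ∀ x : K, (∑ y : K, (if x ^ (p + 1) + y ^ (p + 1) = 0 then 1 else p + 1))
        + p * (∑ y : K, (if x ^ (p + 1) + y ^ (p + 1) = 0 then (1:ℕ) else 0))
        = p ^ 2 * (p + 1) := by
      intro x
      rw [Finset.mul_sum, ← Finset.sum_add_distrib]
      simp only [hpoint]
      rw [Finset.sum_const, smul_eq_mul, card_univ, hcard]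
    rw [Finset.mul_sum, ← Finset.sum_add_distrib]
    simp only [hrow]
    rw [Finset.sum_const, smul_eq_mul, card_univ, hcard]
  have hcount : Fintype.card {v : Fin 3 → K // ∑ i, (v i) ^ (p + 1) = 0}
      = ∑ x : K, ∑ y : K, (if x ^ (p + 1) + y ^ (p + 1) = 0 then 1 else p + 1) := by
    rw [Fintype.card_congr e, Fintype.card_sigma]
    refine Finset.sum_congr rfl fun x _ => ?_
    rw [Fintype.card_sigma]
    refine Finset.sum_congr rfl fun y _ => ?_
    rw [Fintype.card_subtype, aux_N hodd hcard]
  rw [hcount]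
  rw [hB] at hSB
  clear hcount e hN0 hB hpoint hsum01
  generalize hS : (∑ x : K, ∑ y : K, (if x ^ (p + 1) + y ^ (p + 1) = 0 then 1 else p + 1)) = S at hSB ⊢
  obtain ⟨m, hm⟩ : ∃ m, p ^ 2 = m + 1 := ⟨p ^ 2 - 1, (Nat.sub_add_cancel hm1).symm⟩
  rw [hm] at hSB ⊢
  simp only [Nat.add_sub_cancel] at hSB
  have hp5 : p ^ 5 = p * ((m + 1) * (m + 1)) := by rw [← hm]; ring
  have hp3 : p ^ 3 = p * (m + 1) := by rw [← hm]; ring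
  rw [hp5, hp3]
  zify at hSB hm ⊢
  linear_combination hSB - (m : ℤ) * hm
end aux2

open scoped LinearAlgebra.Projectivization
open Projectivization
set_option maxHeartbeats 1600000



open scoped LinearAlgebra.Projectivization

/-- The Fermat curve `C : x₀^(p+1) + x₁^(p+1) + x₂^(p+1) = 0` in `ℙ²` over
an algebraically closed field `k` of odd characteristic `p` is a smooth projective curve
(Jacobian criterion: the partial derivatives `(p+1)·xᵢ^p` vanish simultaneously only at the
origin), and it has exactly `p³ + 1` points with coordinates in the subfield `𝔽_{p²} ⊆ k`. -/
theorem stmt6 (p : ℕ) [Fact p.Prime] (hodd : Odd p)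
    (k : Type*) [Field k] [IsAlgClosed k] [CharP k p]
    (F : Subfield k) (hF : Nat.card F = p ^ 2) :
    -- smoothness (Jacobian criterion for the plane curve `∑ xᵢ^(p+1) = 0`):
    (∀ x : Fin 3 → k, (∀ i, ((p : k) + 1) * x i ^ p = 0) → x = 0) ∧
    -- the number of points of `C` with coordinates in `𝔽_{p²}`:
    Nat.card {x : ℙ F (Fin 3 → F) // ∑ i, (x.rep i) ^ (p + 1) = 0} = p ^ 3 + 1 := by
  classical
  have hp : p.Prime := Fact.out
  have hp2 : 2 ≤ p := hp.two_le
  have hpne : p + 1 ≠ 0 := by omega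
  constructor
  · intro x hx
    funext i
    have h := hx i
    rw [CharP.cast_eq_zero k p, zero_add, one_mul] at h
    have := pow_eq_zero_iff (n := p) (by omega) |>.mp h
    simpa using this
  · have hFfin : Finite F := Nat.finite_of_card_ne_zero (by rw [hF]; positivity)
    letI : Fintype F := Fintype.ofFinite F
    have hcard : Fintype.card F = p ^ 2 := by rw [← Nat.card_eq_fintype_card, hF]
    -- numeric scaffolding
    obtain ⟨m, hm⟩ : ∃ m, m + 1 = p ^ 2 :=
      ⟨p ^ 2 - 1, Nat.sub_add_cancel (Nat.one_le_pow 2 p (by omega))⟩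
    have h4 : 2 ^ 2 ≤ p ^ 2 := Nat.pow_le_pow_left hp2 2
    have hm0 : 0 < m := by omega
    have hmu : Nat.card (Units F) = m := by
      rw [Nat.card_units, hF]; omega
    -- invariance of the Fermat condition under scaling
    have hsmul : ∀ (a : F) (v : Fin 3 → F),
        (∑ i, ((a • v) i) ^ (p + 1)) = a ^ (p + 1) * ∑ i, (v i) ^ (p + 1) := by
      intro a v
      rw [Finset.mul_sum]
      refine Finset.sum_congr rfl fun i _ => ?_
      simp [Pi.smul_apply, smul_eq_mul, mul_pow]
    have key : ∀ (v : Fin 3 → F) (hv : v ≠ 0),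
        ((∑ i, ((Projectivization.mk F v hv).rep i) ^ (p + 1) = 0) ↔
          (∑ i, (v i) ^ (p + 1) = 0)) := by
      intro v hv
      obtain ⟨a, ha⟩ := Projectivization.exists_smul_eq_mk_rep F v hv
      rw [← ha, Units.smul_def, hsmul]
      constructor
      · intro h
        rcases mul_eq_zero.mp h with h' | h'
        · exact absurd h' (pow_ne_zero _ a.ne_zero)
        · exact h'
      · intro h; rw [h, mul_zero]
    -- the map from (unit, projective point) to nonzero affine solutions
    have hcond : ∀ (u : Units F)
        (x : {x : ℙ F (Fin 3 → F) // ∑ i, (x.rep i) ^ (p + 1) = 0}),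
        ((u : F) • x.1.rep ≠ 0) ∧ ∑ i, (((u : F) • x.1.rep) i) ^ (p + 1) = 0 := by
      intro u x
      refine ⟨smul_ne_zero u.ne_zero x.1.rep_nonzero, ?_⟩
      rw [hsmul, x.2, mul_zero]
    set f : Units F × {x : ℙ F (Fin 3 → F) // ∑ i, (x.rep i) ^ (p + 1) = 0} →
        {v : Fin 3 → F // v ≠ 0 ∧ ∑ i, (v i) ^ (p + 1) = 0} :=
      fun ux => ⟨(ux.1 : F) • ux.2.1.rep, hcond ux.1 ux.2⟩ with hfdef
    have hbij : Function.Bijective f := by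
      constructor
      · rintro ⟨u, x, hx⟩ ⟨u', x', hx'⟩ h
        have hval : (u : F) • x.rep = (u' : F) • x'.rep := congrArg Subtype.val h
        have hxx' : x = x' := by
          rw [← x.mk_rep, ← x'.mk_rep, Projectivization.mk_eq_mk_iff]
          refine ⟨u⁻¹ * u', ?_⟩
          rw [Units.smul_def, Units.val_mul, mul_smul, ← hval, ← Units.smul_def,
            ← Units.smul_def, inv_smul_smul]
        subst hxx'
        have huu' : u = u' := by
          obtain ⟨i, hi⟩ := Function.ne_iff.mp x.rep_nonzero
          have h2 := congrFun hval i
          simp only [Pi.smul_apply, smul_eq_mul] at h2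
          have hi' : x.rep i ≠ 0 := by simpa using hi
          exact Units.ext (mul_right_cancel₀ hi' h2)
        subst huu'
        rfl
      · rintro ⟨v, hv0, hvc⟩
        obtain ⟨a, ha⟩ := Projectivization.exists_smul_eq_mk_rep F v hv0
        refine ⟨(a⁻¹, ⟨Projectivization.mk F v hv0, (key v hv0).mpr hvc⟩), ?_⟩
        apply Subtype.ext
        show ((a⁻¹ : Units F) : F) • (Projectivization.mk F v hv0).rep = v
        rw [← ha]
        exact inv_smul_smul a v
    set X := Nat.card {x : ℙ F (Fin 3 → F) // ∑ i, (x.rep i) ^ (p + 1) = 0} with hXdef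
    have h1 : Nat.card {v : Fin 3 → F // v ≠ 0 ∧ ∑ i, (v i) ^ (p + 1) = 0} = m * X := by
      rw [← Nat.card_eq_of_bijective f hbij, Nat.card_prod, hmu]
    -- relate to the full affine count
    have hzero : (0 : Fin 3 → F) ∈
        Finset.univ.filter (fun v : Fin 3 → F => ∑ i, (v i) ^ (p + 1) = 0) := by
      rw [Finset.mem_filter]
      refine ⟨Finset.mem_univ _, ?_⟩
      simp only [Pi.zero_apply]
      rw [zero_pow hpne, Finset.sum_const_zero]
    have h2 : Nat.card {v : Fin 3 → F // v ≠ 0 ∧ ∑ i, (v i) ^ (p + 1) = 0} + 1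
        = Fintype.card {v : Fin 3 → F // ∑ i, (v i) ^ (p + 1) = 0} := by
      rw [Nat.card_eq_fintype_card, Fintype.card_subtype, Fintype.card_subtype]
      have hft : Finset.univ.filter (fun v : Fin 3 → F => v ≠ 0 ∧ ∑ i, (v i) ^ (p + 1) = 0)
          = (Finset.univ.filter (fun v : Fin 3 → F => ∑ i, (v i) ^ (p + 1) = 0)).erase 0 := by
        ext v
        simp only [Finset.mem_filter, Finset.mem_univ, true_and, Finset.mem_erase]
      rw [hft, Finset.card_erase_of_mem hzero]
      exact Nat.succ_pred_eq_of_pos (Finset.card_pos.mpr ⟨0, hzero⟩)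
    have haff := aux_affine (K := F) (p := p) hodd hcard
    rw [← h2, h1] at haff
    -- haff : m * X + 1 + p ^ 3 = p ^ 5 + p ^ 2
    have key2 : m * (p ^ 3 + 1) + 1 + p ^ 3 = p ^ 5 + p ^ 2 := by
      have h5 : p ^ 5 = p ^ 3 * p ^ 2 := by ring
      rw [h5, ← hm]; ring
    have h3 : m * X + (1 + p ^ 3) = m * (p ^ 3 + 1) + (1 + p ^ 3) := by
      rw [← add_assoc, ← add_assoc, haff, key2]
    exact Nat.eq_of_mul_eq_mul_left hm0 (Nat.add_right_cancel h3)
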